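/- Let Σ(θ) = I_p + τa Σ_{m=1}^k θ_m B(m,k) for θ ∈ {0,1}^k, where B(m,k) has entries b_{ij} = 1 iff (i = m and m+1 ≤ j ≤ 2k) or (j = m and m+1 ≤ i ≤ 2k). Then for any θ ≠ θ′, ‖Σ(θ) − Σ(θ′)‖² ≥ H(θ, θ′) · τ² (k/2) a², where H is the Hamming distance and ‖·‖ the operator norm. (Proof: apply the difference matrix to the indicator vector v of indices in [k/2, k].) -/

import Mathlib

/-!
Test `Σ(θ) - Σ(θ')` against the indicator `v` of the coordinates `k+1, …, 2k`. For `m ≤ k` this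
block lies inside the band of row `m` of `B(m,k)` and misses its column `m`, so `B(m,k) v = k e_m`.
Hence `(Σ(θ) - Σ(θ')) v = τ a k ∑ₘ (θₘ - θ'ₘ) e_m` has squared norm `τ² a² k² H(θ, θ')`, while
`‖v‖² = k`; this gives `‖Σ(θ) - Σ(θ')‖² ≥ H(θ, θ') τ² a² k`.
-/

open Matrix

/-- The matrix `B(m,k)` (1-indexed): `b_{ij} = 1` iff (`i = m` and `m+1 ≤ j ≤ 2k`)
or (`j = m` and `m+1 ≤ i ≤ 2k`). Here indices of `Fin p` are shifted by one. -/
def lowerBdMatrix (p k m : ℕ) : Matrix (Fin p) (Fin p) ℝ :=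
  Matrix.of fun i j =>
    if ((i : ℕ) + 1 = m ∧ m + 1 ≤ (j : ℕ) + 1 ∧ (j : ℕ) + 1 ≤ 2 * k) ∨
       ((j : ℕ) + 1 = m ∧ m + 1 ≤ (i : ℕ) + 1 ∧ (i : ℕ) + 1 ≤ 2 * k)
    then 1 else 0


theorem Fin.sum_ite_mem_Ico {M : Type*} [AddCommMonoid M] {a b p : ℕ} (hbp : b ≤ p) (g : M) :
    ∑ j : Fin p, (if (j : ℕ) ∈ Finset.Ico a b then g else 0) = (b - a) • g := by
  rw [Fin.sum_univ_eq_sum_range (fun j => if j ∈ Finset.Ico a b then g else 0),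
    Finset.sum_ite_mem, Finset.inter_eq_right.mpr, Finset.sum_const, Nat.card_Ico]
  exact fun j hj => Finset.mem_range.mpr ((Finset.mem_Ico.mp hj).2.trans_le hbp)

theorem Fin.sum_ite_lt_eq_sum_Icc {M : Type*} [AddCommMonoid M] {k p : ℕ} (hkp : k ≤ p)
    (f : ℕ → M) :
    ∑ i : Fin p, (if (i : ℕ) < k then f (i + 1) else 0) = ∑ m ∈ Finset.Icc 1 k, f m := by
  rw [Fin.sum_univ_eq_sum_range (fun i => if i < k then f (i + 1) else 0),
    ← Finset.sum_range_add_sum_Ico _ hkp,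
    Finset.sum_congr rfl fun i hi => if_pos (Finset.mem_range.mp hi),
    Finset.sum_congr rfl fun i hi => if_neg (Finset.mem_Ico.mp hi).1.not_gt,
    Finset.sum_const_zero, add_zero, Finset.range_eq_Ico, Finset.sum_Ico_add', zero_add,
    Finset.Ico_add_one_right_eq_Icc]

theorem Matrix.sum_sq_mulVec_le_sq_norm_toEuclideanCLM_mul {n : Type*} [Fintype n]
    [DecidableEq n] (A : Matrix n n ℝ) (x : n → ℝ) :
    ∑ i, (A *ᵥ x) i ^ 2 ≤ ‖toEuclideanCLM (𝕜 := ℝ) A‖ ^ 2 * ∑ i, x i ^ 2 := by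
  have h := (toEuclideanCLM (𝕜 := ℝ) A).le_opNorm (WithLp.toLp 2 x)
  rw [toEuclideanCLM_toLp] at h
  rw [← EuclideanSpace.real_norm_sq_eq (WithLp.toLp 2 (A *ᵥ x)),
    ← EuclideanSpace.real_norm_sq_eq (WithLp.toLp 2 x), ← mul_pow]
  exact pow_le_pow_left₀ (norm_nonneg _) h 2

theorem sq_boole_sub_boole (b b' : Bool) :
    ((if b then (1 : ℝ) else 0) - if b' then 1 else 0) ^ 2 = if b ≠ b' then 1 else 0 := by
  cases b <;> cases b' <;> norm_num

/-- `0`-indexed, so this is the indicator of the coordinates `k+1, …, 2k` of `B(m,k)`. -/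
def middleBlockIndicator (p k : ℕ) : Fin p → ℝ :=
  fun j => if (j : ℕ) ∈ Finset.Ico k (2 * k) then 1 else 0

theorem sum_sq_middleBlockIndicator {p k : ℕ} (hp : 2 * k ≤ p) :
    ∑ j, middleBlockIndicator p k j ^ 2 = k := by
  simp only [middleBlockIndicator, ite_pow, one_pow, zero_pow two_ne_zero]
  rw [Fin.sum_ite_mem_Ico hp, nsmul_one, two_mul, Nat.add_sub_cancel]

theorem lowerBdMatrix_mulVec_middleBlockIndicator {p k m : ℕ} (hp : 2 * k ≤ p)
    (hm : m ∈ Finset.Icc 1 k) (i : Fin p) :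
    (lowerBdMatrix p k m *ᵥ middleBlockIndicator p k) i =
      if (i : ℕ) + 1 = m then (k : ℝ) else 0 := by
  obtain ⟨hm1, hmk⟩ := Finset.mem_Icc.mp hm
  have hentry : ∀ j : Fin p, lowerBdMatrix p k m i j * middleBlockIndicator p k j =
      if (j : ℕ) ∈ Finset.Ico k (2 * k) then (if (i : ℕ) + 1 = m then (1 : ℝ) else 0) else 0 := by
    intro j
    simp only [lowerBdMatrix, middleBlockIndicator, of_apply, Finset.mem_Ico]
    split_ifs <;> first | omega | simp
  rw [mulVec, dotProduct, Finset.sum_congr rfl fun j _ => hentry j, Fin.sum_ite_mem_Ico hp,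
    two_mul, Nat.add_sub_cancel, smul_ite, nsmul_one, smul_zero]

theorem sum_smul_lowerBdMatrix_mulVec_middleBlockIndicator {p k : ℕ} (hp : 2 * k ≤ p)
    (c : ℕ → ℝ) (i : Fin p) :
    ((∑ m ∈ Finset.Icc 1 k, c m • lowerBdMatrix p k m) *ᵥ middleBlockIndicator p k) i =
      if (i : ℕ) < k then k * c (i + 1) else 0 := by
  simp only [sum_mulVec, smul_mulVec, Finset.sum_apply, Pi.smul_apply, smul_eq_mul]
  rw [Finset.sum_congr rfl fun m hm => by
      rw [lowerBdMatrix_mulVec_middleBlockIndicator hp hm, mul_ite, mul_zero],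
    Finset.sum_ite_eq]
  simp only [Finset.mem_Icc, le_add_iff_nonneg_left, zero_le, true_and, Nat.add_one_le_iff,
    mul_comm]

theorem sum_sq_sum_smul_lowerBdMatrix_mulVec_middleBlockIndicator {p k : ℕ} (hp : 2 * k ≤ p)
    (c : ℕ → ℝ) :
    ∑ i, ((∑ m ∈ Finset.Icc 1 k, c m • lowerBdMatrix p k m) *ᵥ middleBlockIndicator p k) i ^ 2 =
      k ^ 2 * ∑ m ∈ Finset.Icc 1 k, c m ^ 2 := by
  simp only [sum_smul_lowerBdMatrix_mulVec_middleBlockIndicator hp, ite_pow, mul_pow,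
    zero_pow two_ne_zero]
  rw [Fin.sum_ite_lt_eq_sum_Icc (by omega) fun m => (k : ℝ) ^ 2 * c m ^ 2, Finset.mul_sum]

theorem lower_bound_operator_norm_separation_general (p k : ℕ) (hk : 0 < k) (hp : 2 * k ≤ p)
    (τ a : ℝ) (θ θ' : ℕ → Bool)
    (Sθ Sθ' : Matrix (Fin p) (Fin p) ℝ)
    (hS : Sθ = 1 + (τ * a) •
      ∑ m ∈ Finset.Icc 1 k, (if θ m then (1 : ℝ) else 0) • lowerBdMatrix p k m)
    (hS' : Sθ' = 1 + (τ * a) •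
      ∑ m ∈ Finset.Icc 1 k, (if θ' m then (1 : ℝ) else 0) • lowerBdMatrix p k m) :
    ‖Matrix.toEuclideanCLM (𝕜 := ℝ) (Sθ - Sθ')‖ ^ 2 ≥
      (((Finset.Icc 1 k).filter (fun m => θ m ≠ θ' m)).card : ℝ) *
        τ ^ 2 * ((k : ℝ) / 2) * a ^ 2 := by
  set H : ℝ := (((Finset.Icc 1 k).filter (fun m => θ m ≠ θ' m)).card : ℝ)
  set c : ℕ → ℝ := fun m => (if θ m then (1 : ℝ) else 0) - if θ' m then 1 else 0
  have hdiff : Sθ - Sθ' = (τ * a) • ∑ m ∈ Finset.Icc 1 k, c m • lowerBdMatrix p k m := by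
    simp only [hS, hS', c, sub_smul, Finset.sum_sub_distrib, add_sub_add_left_eq_sub, smul_sub]
  have himage : ∑ i, ((Sθ - Sθ') *ᵥ middleBlockIndicator p k) i ^ 2 = (τ * a * k) ^ 2 * H := by
    simp only [hdiff, smul_mulVec, Pi.smul_apply, smul_eq_mul, mul_pow, ← Finset.mul_sum,
      sum_sq_sum_smul_lowerBdMatrix_mulVec_middleBlockIndicator hp, c, sq_boole_sub_boole,
      Finset.sum_boole, H]
    ring
  have hbound := (Sθ - Sθ').sum_sq_mulVec_le_sq_norm_toEuclideanCLM_mul (middleBlockIndicator p k)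
  rw [himage, sum_sq_middleBlockIndicator hp] at hbound
  have hk' : (0 : ℝ) < k := by exact_mod_cast hk
  have hweight : 0 ≤ H * τ ^ 2 * a ^ 2 := by positivity
  calc H * τ ^ 2 * ((k : ℝ) / 2) * a ^ 2 ≤ H * τ ^ 2 * a ^ 2 * k := by nlinarith
    _ ≤ ‖toEuclideanCLM (𝕜 := ℝ) (Sθ - Sθ')‖ ^ 2 :=
      le_of_mul_le_mul_right (by linarith) hk'

/-- For `Σ(θ) = I + τ a ∑_{m=1}^k θ_m B(m,k)` with `θ ∈ {0,1}^k` and `p ≥ 2k`: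
for `θ ≠ θ'`, `‖Σ(θ) - Σ(θ')‖² ≥ H(θ,θ') · τ² (k/2) a²` where `H` is the Hamming
distance and `‖·‖` the operator norm. -/
theorem lower_bound_operator_norm_separation (p k : ℕ) (hk : 0 < k) (hp : 2 * k ≤ p)
    (τ a : ℝ) (hτ : 0 < τ) (ha : 0 < a) (θ θ' : ℕ → Bool) (hθ : θ ≠ θ')
    (Sθ Sθ' : Matrix (Fin p) (Fin p) ℝ)
    (hS : Sθ = 1 + (τ * a) •
      ∑ m ∈ Finset.Icc 1 k, (if θ m then (1 : ℝ) else 0) • lowerBdMatrix p k m)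
    (hS' : Sθ' = 1 + (τ * a) •
      ∑ m ∈ Finset.Icc 1 k, (if θ' m then (1 : ℝ) else 0) • lowerBdMatrix p k m) :
    ‖Matrix.toEuclideanCLM (𝕜 := ℝ) (Sθ - Sθ')‖ ^ 2 ≥
      (((Finset.Icc 1 k).filter (fun m => θ m ≠ θ' m)).card : ℝ) *
        τ ^ 2 * ((k : ℝ) / 2) * a ^ 2 :=
  lower_bound_operator_norm_separation_general p k hk hp τ a θ θ' Sθ Sθ' hS hS'
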